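/- arXiv:1905.10736 — 2 statements merged into one kernel-verified Lean document; each statement's English description precedes it below -/
import Mathlib

section
/- Let n ≥ 1, let E = EuclideanSpace ℝ (Fin n), and let α and β be star partial homeomorphisms of E. Then α and β generate the same principal ideal under left multiplication — that is, there exist star partial homeomorphisms γ and δ with β ≈ γ.trans α and α ≈ δ.trans β — if and only if α.target = β.target. (This describes the other one-sided Green relation on the semigroup of star partial homeomorphisms: it is determined by equality of ranges.) -/
noncomputable def radial {n : ℕ} (L : Set (EuclideanSpace ℝ (Fin n)))
    (u : EuclideanSpace ℝ (Fin n)) : ℝ :=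
  sSup {c : ℝ | 0 ≤ c ∧ c • u ∈ L}

def IsStar {n : ℕ} (L : Set (EuclideanSpace ℝ (Fin n))) : Prop :=
  IsCompact L ∧ (0 : EuclideanSpace ℝ (Fin n)) ∈ interior L ∧
    (∀ x ∈ L, segment ℝ 0 x ⊆ L) ∧
    ContinuousOn (radial L) (Metric.sphere (0 : EuclideanSpace ℝ (Fin n)) 1)

def IsStarPartialHomeo {n : ℕ}
    (α : PartialEquiv (EuclideanSpace ℝ (Fin n)) (EuclideanSpace ℝ (Fin n))) : Prop :=
  IsStar α.source ∧ IsStar α.target ∧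
    ContinuousOn α α.source ∧ ContinuousOn α.symm α.target ∧
    α 0 = 0 ∧ ∀ x ∈ α.source, α '' (segment ℝ 0 x) = segment ℝ 0 (α x)

/-!
If `β ≈ γ.trans α`, then every value of `β` is a value of `α`, so mutual left multiples
have equal ranges. Conversely, if `α` and `β` have the same range, then
`γ = β.trans α.symm` is the composite of two star partial homeomorphisms glued along a
common star (`β.target = α.symm.source`), hence again a star partial homeomorphism, and
`γ.trans α` undoes the `α.symm` on the range of `β`; symmetrically for `δ = α.trans β.symm`.
-/

open Set

namespace PartialEquiv

variable {X Y Z : Type*}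

theorem trans_source_of_target_eq_source {e : PartialEquiv X Y} {e' : PartialEquiv Y Z}
    (h : e.target = e'.source) : (e.trans e').source = e.source := by
  rw [trans_source, ← h]
  exact inter_eq_left.2 e.mapsTo

theorem trans_target_of_target_eq_source {e : PartialEquiv X Y} {e' : PartialEquiv Y Z}
    (h : e.target = e'.source) : (e.trans e').target = e'.target := by
  rw [trans_target, h]
  exact inter_eq_left.2 e'.mapsTo_symm

theorem target_subset_of_eqOnSource_trans {e : PartialEquiv X Z} {e' : PartialEquiv X Y}
    {e'' : PartialEquiv Y Z} (h : e ≈ e'.trans e'') : e.target ⊆ e''.target := by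
  rw [h.target_eq, trans_target]
  exact inter_subset_left

theorem eqOnSource_trans_symm_trans {e e' : PartialEquiv X Y} (h : e.target ⊆ e'.target) :
    e ≈ (e.trans e'.symm).trans e' := by
  rw [trans_assoc]
  calc e = e.restr (e ⁻¹' e'.target) :=
        (restr_eq_of_source_subset fun x hx =>
          show e x ∈ e'.target from h (e.map_source hx)).symm
    _ = e.trans (ofSet e'.target) := (trans_ofSet e _).symm
    _ ≈ e.trans (e'.symm.trans e') :=
        (eqOnSource_refl e).trans' (Setoid.symm (symm_trans_self e'))

end PartialEquiv

namespace IsStarPartialHomeo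

variable {n : ℕ} {α β : PartialEquiv (EuclideanSpace ℝ (Fin n)) (EuclideanSpace ℝ (Fin n))}

theorem symm (hα : IsStarPartialHomeo α) : IsStarPartialHomeo α.symm := by
  obtain ⟨hsrc, htgt, hcont, hcont_symm, hzero, hseg⟩ := hα
  refine ⟨htgt, hsrc, hcont_symm, hcont, ?_, fun y hy => ?_⟩
  · simpa only [hzero] using α.left_inv (interior_subset hsrc.2.1)
  · have hx : α.symm y ∈ α.source := α.map_target hy
    have hseg_y : α '' segment ℝ 0 (α.symm y) = segment ℝ 0 y := by
      rw [hseg _ hx, α.right_inv hy]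
    rw [← hseg_y, α.symm_image_image_of_subset_source (hsrc.2.2.1 _ hx)]

theorem trans (hα : IsStarPartialHomeo α) (hβ : IsStarPartialHomeo β)
    (h : α.target = β.source) : IsStarPartialHomeo (α.trans β) := by
  obtain ⟨hαsrc, -, hαcont, hαcont_symm, hαzero, hαseg⟩ := hα
  obtain ⟨-, hβtgt, hβcont, hβcont_symm, hβzero, hβseg⟩ := hβ
  rw [IsStarPartialHomeo, PartialEquiv.trans_source_of_target_eq_source h,
    PartialEquiv.trans_target_of_target_eq_source h, PartialEquiv.coe_trans,
    PartialEquiv.coe_trans_symm]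
  refine ⟨hαsrc, hβtgt, hβcont.comp hαcont (h ▸ α.mapsTo),
    hαcont_symm.comp hβcont_symm (h ▸ β.mapsTo_symm), by simp [hαzero, hβzero],
    fun x hx => ?_⟩
  rw [image_comp, hαseg x hx, hβseg _ (h ▸ α.map_source hx), Function.comp_apply]

end IsStarPartialHomeo

theorem stmt_10_general (n : ℕ)
    (α β : PartialEquiv (EuclideanSpace ℝ (Fin n)) (EuclideanSpace ℝ (Fin n)))
    (hα : IsStarPartialHomeo α) (hβ : IsStarPartialHomeo β) :
    (∃ γ δ : PartialEquiv (EuclideanSpace ℝ (Fin n)) (EuclideanSpace ℝ (Fin n)),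
        IsStarPartialHomeo γ ∧ IsStarPartialHomeo δ ∧
        β ≈ γ.trans α ∧ α ≈ δ.trans β) ↔ α.target = β.target := by
  constructor
  · rintro ⟨γ, δ, -, -, hβ_eq, hα_eq⟩
    exact (PartialEquiv.target_subset_of_eqOnSource_trans hα_eq).antisymm
      (PartialEquiv.target_subset_of_eqOnSource_trans hβ_eq)
  · intro h
    exact ⟨β.trans α.symm, α.trans β.symm, hβ.trans hα.symm h.symm, hα.trans hβ.symm h,
      PartialEquiv.eqOnSource_trans_symm_trans h.ge,
      PartialEquiv.eqOnSource_trans_symm_trans h.le⟩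

theorem stmt_10 (n : ℕ) (hn : 1 ≤ n)
    (α β : PartialEquiv (EuclideanSpace ℝ (Fin n)) (EuclideanSpace ℝ (Fin n)))
    (hα : IsStarPartialHomeo α) (hβ : IsStarPartialHomeo β) :
    (∃ γ δ : PartialEquiv (EuclideanSpace ℝ (Fin n)) (EuclideanSpace ℝ (Fin n)),
        IsStarPartialHomeo γ ∧ IsStarPartialHomeo δ ∧
        β ≈ γ.trans α ∧ α ≈ δ.trans β) ↔ α.target = β.target :=
  stmt_10_general n α β hα hβ
end

section
/- Let n ≥ 1, let E = EuclideanSpace ℝ (Fin n), and let L₁ and L₂ be stars in E. Then there exists a star partial homeomorphism θ of E with θ.source = L₁ and θ.target = L₂ such that the conjugation map Φ(α) = θ.symm.trans (α.trans θ) satisfies: (a) for every star partial homeomorphism α with α.source = α.target = L₁, Φ(α) is a star partial homeomorphism with Φ(α).source = Φ(α).target = L₂; (b) Φ(α.trans β) ≈ (Φ α).trans (Φ β) for all such α, β; (c) for every star partial homeomorphism γ with γ.source = γ.target = L₂ there is a star partial homeomorphism α with α.source = α.target = L₁ and Φ(α) ≈ γ; and (d) Φ(α) ≈ Φ(β) implies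 α ≈ β. (Hence any two maximal subgroups of the semigroup of star partial homeomorphisms are isomorphic; in particular, taking L₂ = Metric.closedBall 0 1, each is isomorphic to the group of star homeomorphisms of the closed unit ball.) -/
namespace StarAux

variable {n : ℕ} {L L₁ L₂ : Set (EuclideanSpace ℝ (Fin n))} {u x y : EuclideanSpace ℝ (Fin n)}

theorem zero_mem (h : IsStar L) : (0 : EuclideanSpace ℝ (Fin n)) ∈ L := interior_subset h.2.1

theorem mem_segment_zero :
    y ∈ segment ℝ (0 : EuclideanSpace ℝ (Fin n)) x ↔ ∃ t : ℝ, 0 ≤ t ∧ t ≤ 1 ∧ y = t • x := by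
  constructor
  · rintro ⟨a, b, ha, hb, hab, rfl⟩
    exact ⟨b, hb, by linarith, by simp⟩
  · rintro ⟨t, h0, h1, rfl⟩
    exact ⟨1 - t, t, by linarith, h0, by ring, by simp⟩

theorem radset_nonempty (h : IsStar L) : {c : ℝ | 0 ≤ c ∧ c • u ∈ L}.Nonempty :=
  ⟨0, le_refl 0, by simpa using zero_mem h⟩

theorem radset_bddAbove (h : IsStar L) (hu : ‖u‖ = 1) :
    BddAbove {c : ℝ | 0 ≤ c ∧ c • u ∈ L} := by
  obtain ⟨R, hR⟩ := h.1.isBounded.subset_closedBall 0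
  refine ⟨R, fun c hc => ?_⟩
  have h2 := hR hc.2
  rw [Metric.mem_closedBall, dist_zero_right, norm_smul, hu, mul_one, Real.norm_eq_abs,
    abs_of_nonneg hc.1] at h2
  exact h2

theorem radial_pos (h : IsStar L) (hu : ‖u‖ = 1) : 0 < radial L u := by
  obtain ⟨ε, hε, hball⟩ := Metric.mem_nhds_iff.1 (mem_interior_iff_mem_nhds.1 h.2.1)
  have hmem : (ε / 2) ∈ {c : ℝ | 0 ≤ c ∧ c • u ∈ L} := by
    refine ⟨by positivity, hball ?_⟩
    rw [Metric.mem_ball, dist_zero_right, norm_smul, hu, mul_one, Real.norm_eq_abs,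
      abs_of_nonneg (by positivity)]
    linarith
  have := le_csSup (radset_bddAbove h hu) hmem
  have : 0 < ε / 2 := by positivity
  calc (0:ℝ) < ε / 2 := this
    _ ≤ radial L u := le_csSup (radset_bddAbove h hu) hmem

theorem radial_smul_mem (h : IsStar L) (hu : ‖u‖ = 1) : radial L u • u ∈ L := by
  have hclosed : IsClosed {c : ℝ | 0 ≤ c ∧ c • u ∈ L} := by
    have : {c : ℝ | 0 ≤ c ∧ c • u ∈ L} = Set.Ici 0 ∩ (fun c : ℝ => c • u) ⁻¹' L := by
      rfl
    rw [this]
    exact isClosed_Ici.inter (h.1.isClosed.preimage (continuous_id.smul continuous_const))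
  exact (hclosed.csSup_mem (radset_nonempty h) (radset_bddAbove h hu)).2

theorem smul_mem_iff (h : IsStar L) (hu : ‖u‖ = 1) {c : ℝ} (hc : 0 ≤ c) :
    c • u ∈ L ↔ c ≤ radial L u := by
  constructor
  · intro hm; exact le_csSup (radset_bddAbove h hu) ⟨hc, hm⟩
  · intro hle
    have hρ := radial_pos h hu
    have : c • u ∈ segment ℝ (0 : EuclideanSpace ℝ (Fin n)) (radial L u • u) := by
      rw [mem_segment_zero]
      exact ⟨c / radial L u, by positivity, by rw [div_le_one hρ]; exact hle,
        by rw [smul_smul, div_mul_cancel₀ _ hρ.ne']⟩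
    exact h.2.2.1 _ (radial_smul_mem h hu) this

theorem norm_unit (hx : x ≠ 0) : ‖(‖x‖⁻¹ • x)‖ = 1 := by
  rw [norm_smul, Real.norm_eq_abs, abs_of_nonneg (by positivity), inv_mul_cancel₀ (norm_ne_zero_iff.2 hx)]

theorem mem_star_iff (h : IsStar L) (hx : x ≠ 0) :
    x ∈ L ↔ ‖x‖ ≤ radial L (‖x‖⁻¹ • x) := by
  have hxx : ‖x‖ • (‖x‖⁻¹ • x) = x := by
    rw [smul_smul, mul_inv_cancel₀ (norm_ne_zero_iff.2 hx), one_smul]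
  rw [← smul_mem_iff h (norm_unit hx) (norm_nonneg x), hxx]


noncomputable def thetaFun (L₁ L₂ : Set (EuclideanSpace ℝ (Fin n)))
    (x : EuclideanSpace ℝ (Fin n)) : EuclideanSpace ℝ (Fin n) :=
  (radial L₂ (‖x‖⁻¹ • x) / radial L₁ (‖x‖⁻¹ • x)) • x

theorem thetaFun_zero : thetaFun L₁ L₂ (0 : EuclideanSpace ℝ (Fin n)) = 0 := smul_zero _

theorem unit_smul {t : ℝ} (ht : 0 < t) : ‖t • x‖⁻¹ • (t • x) = ‖x‖⁻¹ • x := by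
  rw [norm_smul, Real.norm_eq_abs, abs_of_pos ht, smul_smul]
  congr 1
  rcases eq_or_ne ‖x‖ 0 with h | h
  · simp [h]
  · field_simp

theorem thetaFun_homog {t : ℝ} (ht : 0 ≤ t) :
    thetaFun L₁ L₂ (t • x) = t • thetaFun L₁ L₂ x := by
  rcases ht.lt_or_eq with ht' | rfl
  · rw [thetaFun, thetaFun, unit_smul ht', smul_comm]
  · simp [thetaFun_zero]

theorem thetaFun_mapsTo (h₁ : IsStar L₁) (h₂ : IsStar L₂) (hx : x ∈ L₁) :
    thetaFun L₁ L₂ x ∈ L₂ := by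
  rcases eq_or_ne x 0 with rfl | hx0
  · rw [thetaFun_zero]; exact zero_mem h₂
  set u := ‖x‖⁻¹ • x with hu_def
  have hu : ‖u‖ = 1 := norm_unit hx0
  have hρ₁ := radial_pos h₁ hu
  have hρ₂ := radial_pos h₂ hu
  have hcpos : 0 < radial L₂ u / radial L₁ u := by positivity
  have hxle : ‖x‖ ≤ radial L₁ u := (mem_star_iff h₁ hx0).1 hx
  have hθ : thetaFun L₁ L₂ x = (radial L₂ u / radial L₁ u) • x := rfl
  rcases eq_or_ne (thetaFun L₁ L₂ x) 0 with h0 | h0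
  · rw [h0]; exact zero_mem h₂
  rw [mem_star_iff h₂ h0, hθ, unit_smul hcpos, ← hu_def, norm_smul, Real.norm_eq_abs,
    abs_of_pos hcpos]
  calc radial L₂ u / radial L₁ u * ‖x‖ ≤ radial L₂ u / radial L₁ u * radial L₁ u := by
        exact mul_le_mul_of_nonneg_left hxle hcpos.le
    _ = radial L₂ u := by field_simp

theorem thetaFun_left_inv (h₁ : IsStar L₁) (h₂ : IsStar L₂) (hx : x ∈ L₁) :
    thetaFun L₂ L₁ (thetaFun L₁ L₂ x) = x := by
  rcases eq_or_ne x 0 with rfl | hx0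
  · rw [thetaFun_zero, thetaFun_zero]
  set u := ‖x‖⁻¹ • x with hu_def
  have hu : ‖u‖ = 1 := norm_unit hx0
  have hρ₁ := radial_pos h₁ hu
  have hρ₂ := radial_pos h₂ hu
  have hcpos : 0 < radial L₂ u / radial L₁ u := by positivity
  have hθ : thetaFun L₁ L₂ x = (radial L₂ u / radial L₁ u) • x := rfl
  rw [hθ, thetaFun, unit_smul hcpos, ← hu_def, smul_smul]
  rw [div_mul_div_comm, mul_comm, div_self (by positivity), one_smul]


theorem unitMap_continuousOn :
    ContinuousOn (fun x : EuclideanSpace ℝ (Fin n) => ‖x‖⁻¹ • x) {x | x ≠ 0} := by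
  exact ContinuousOn.smul
    ((continuous_norm.continuousOn).inv₀ (fun x hx => norm_ne_zero_iff.2 hx)) continuousOn_id

theorem radial_comp_continuousOn (h : IsStar L) :
    ContinuousOn (fun x : EuclideanSpace ℝ (Fin n) => radial L (‖x‖⁻¹ • x)) {x | x ≠ 0} := by
  refine h.2.2.2.comp unitMap_continuousOn (fun x hx => ?_)
  simpa [Metric.mem_sphere, dist_zero_right] using norm_unit hx

theorem thetaFun_continuousAt (h₁ : IsStar L₁) (h₂ : IsStar L₂) (hx : x ≠ 0) :
    ContinuousAt (thetaFun L₁ L₂) x := by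
  have hopen : IsOpen {y : EuclideanSpace ℝ (Fin n) | y ≠ 0} := isOpen_compl_singleton
  have hcont : ContinuousOn (thetaFun L₁ L₂) {y | y ≠ 0} := by
    refine ContinuousOn.smul (ContinuousOn.div (radial_comp_continuousOn h₂)
      (radial_comp_continuousOn h₁) (fun y hy => ?_)) continuousOn_id
    exact (radial_pos h₁ (norm_unit hy)).ne'
  exact hcont.continuousAt (hopen.mem_nhds hx)

theorem nontrivial_E (hn : 1 ≤ n) : Nontrivial (EuclideanSpace ℝ (Fin n)) := by
  refine ⟨0, EuclideanSpace.single ⟨0, hn⟩ 1, fun h => ?_⟩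
  have := congrArg (fun f => f ⟨0, hn⟩) h
  simp [EuclideanSpace.single_apply] at this

theorem thetaFun_bound (hn : 1 ≤ n) (h₁ : IsStar L₁) (h₂ : IsStar L₂) :
    ∃ M : ℝ, 0 ≤ M ∧ ∀ x : EuclideanSpace ℝ (Fin n), ‖thetaFun L₁ L₂ x‖ ≤ M * ‖x‖ := by
  haveI := nontrivial_E hn
  have hsne : (Metric.sphere (0 : EuclideanSpace ℝ (Fin n)) 1).Nonempty :=
    NormedSpace.sphere_nonempty.2 zero_le_one
  obtain ⟨u₁, hu₁, hmin⟩ := (isCompact_sphere (0 : EuclideanSpace ℝ (Fin n)) 1).exists_isMinOn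
    hsne h₁.2.2.2
  obtain ⟨u₂, hu₂, hmax⟩ := (isCompact_sphere (0 : EuclideanSpace ℝ (Fin n)) 1).exists_isMaxOn
    hsne h₂.2.2.2
  have hm : 0 < radial L₁ u₁ := radial_pos h₁ (by simpa [dist_zero_right] using hu₁)
  set m := radial L₁ u₁
  set C := radial L₂ u₂
  refine ⟨C / m, ?_, fun x => ?_⟩
  · have : 0 < C := radial_pos h₂ (by simpa [dist_zero_right] using hu₂)
    positivity
  rcases eq_or_ne x 0 with rfl | hx0
  · simp [thetaFun_zero]
  have husph : (‖x‖⁻¹ • x) ∈ Metric.sphere (0 : EuclideanSpace ℝ (Fin n)) 1 := by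
    simpa [dist_zero_right] using norm_unit hx0
  have hu : ‖(‖x‖⁻¹ • x)‖ = 1 := norm_unit hx0
  have hρ₁ := radial_pos h₁ hu
  have hρ₂ := radial_pos h₂ hu
  rw [thetaFun, norm_smul, Real.norm_eq_abs, abs_of_pos (by positivity)]
  have hle₁ : m ≤ radial L₁ (‖x‖⁻¹ • x) := hmin husph
  have hle₂ : radial L₂ (‖x‖⁻¹ • x) ≤ C := hmax husph
  have : radial L₂ (‖x‖⁻¹ • x) / radial L₁ (‖x‖⁻¹ • x) ≤ C / m :=
    div_le_div₀ (le_trans hρ₂.le hle₂) hle₂ hm hle₁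
  exact mul_le_mul_of_nonneg_right this (norm_nonneg x)

theorem thetaFun_continuousOn (hn : 1 ≤ n) (h₁ : IsStar L₁) (h₂ : IsStar L₂) :
    ContinuousOn (thetaFun L₁ L₂) L₁ := by
  intro x hx
  rcases eq_or_ne x 0 with rfl | hx0
  · obtain ⟨M, hM0, hM⟩ := thetaFun_bound hn h₁ h₂
    rw [ContinuousWithinAt, thetaFun_zero]
    refine squeeze_zero_norm hM ?_
    have : Filter.Tendsto (fun y : EuclideanSpace ℝ (Fin n) => M * ‖y‖) (nhds 0) (nhds 0) := by
      have := (continuous_norm.const_smul M).tendsto (0 : EuclideanSpace ℝ (Fin n))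
      simpa [Pi.smul_def] using this
    exact this.mono_left nhdsWithin_le_nhds
  · exact (thetaFun_continuousAt h₁ h₂ hx0).continuousWithinAt


theorem seg_image {f : EuclideanSpace ℝ (Fin n) → EuclideanSpace ℝ (Fin n)}
    (hom : ∀ (t : ℝ), 0 ≤ t → f (t • x) = t • f x) :
    f '' segment ℝ 0 x = segment ℝ 0 (f x) := by
  ext y
  simp only [Set.mem_image]
  constructor
  · rintro ⟨z, hz, rfl⟩
    obtain ⟨t, ht0, ht1, rfl⟩ := mem_segment_zero.1 hz
    exact mem_segment_zero.2 ⟨t, ht0, ht1, (hom t ht0).symm ▸ rfl⟩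
  · rintro hy
    obtain ⟨t, ht0, ht1, rfl⟩ := mem_segment_zero.1 hy
    exact ⟨t • x, mem_segment_zero.2 ⟨t, ht0, ht1, rfl⟩, hom t ht0⟩

noncomputable def theta (L₁ L₂ : Set (EuclideanSpace ℝ (Fin n)))
    (h₁ : IsStar L₁) (h₂ : IsStar L₂) :
    PartialEquiv (EuclideanSpace ℝ (Fin n)) (EuclideanSpace ℝ (Fin n)) where
  toFun := thetaFun L₁ L₂
  invFun := thetaFun L₂ L₁
  source := L₁
  target := L₂
  map_source' := fun _ hx => thetaFun_mapsTo h₁ h₂ hx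
  map_target' := fun _ hx => thetaFun_mapsTo h₂ h₁ hx
  left_inv' := fun _ hx => thetaFun_left_inv h₁ h₂ hx
  right_inv' := fun _ hx => thetaFun_left_inv h₂ h₁ hx

theorem theta_isStarPH (hn : 1 ≤ n) (h₁ : IsStar L₁) (h₂ : IsStar L₂) :
    IsStarPartialHomeo (theta L₁ L₂ h₁ h₂) := by
  refine ⟨h₁, h₂, thetaFun_continuousOn hn h₁ h₂, thetaFun_continuousOn hn h₂ h₁,
    thetaFun_zero, fun x hx => ?_⟩
  exact seg_image (fun t ht => thetaFun_homog ht)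

theorem trans_source_eq {α β : PartialEquiv (EuclideanSpace ℝ (Fin n)) (EuclideanSpace ℝ (Fin n))}
    (h : α.target = β.source) : (α.trans β).source = α.source := by
  rw [PartialEquiv.trans_source]
  refine Set.inter_eq_left.2 (fun x hx => ?_)
  exact Set.mem_preimage.2 (h ▸ α.map_source hx)

theorem trans_target_eq {α β : PartialEquiv (EuclideanSpace ℝ (Fin n)) (EuclideanSpace ℝ (Fin n))}
    (h : α.target = β.source) : (α.trans β).target = β.target := by
  rw [PartialEquiv.trans_target]
  refine Set.inter_eq_left.2 (fun y hy => ?_)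
  exact Set.mem_preimage.2 (h ▸ β.map_target hy)

theorem zero_mem_source {α : PartialEquiv (EuclideanSpace ℝ (Fin n)) (EuclideanSpace ℝ (Fin n))}
    (hα : IsStarPartialHomeo α) : (0 : EuclideanSpace ℝ (Fin n)) ∈ α.source :=
  zero_mem hα.1

theorem symm_isStarPH {α : PartialEquiv (EuclideanSpace ℝ (Fin n)) (EuclideanSpace ℝ (Fin n))}
    (hα : IsStarPartialHomeo α) : IsStarPartialHomeo α.symm := by
  obtain ⟨hs, ht, hc, hc', h0, hseg⟩ := hα
  have h0' : α.symm 0 = 0 := by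
    have := α.left_inv (zero_mem hs)
    rwa [h0] at this
  refine ⟨ht, hs, hc', by simpa using hc, h0', fun y hy => ?_⟩
  have hy' : α.symm y ∈ α.source := α.map_target hy
  have hyy : α (α.symm y) = y := α.right_inv hy
  have hsub : segment ℝ 0 (α.symm y) ⊆ α.source := hs.2.2.1 _ hy'
  calc α.symm '' segment ℝ 0 y = α.symm '' (α '' segment ℝ 0 (α.symm y)) := by
        rw [hseg _ hy', hyy]
    _ = segment ℝ 0 (α.symm y) := α.symm_image_image_of_subset_source hsub

theorem trans_isStarPH {α β : PartialEquiv (EuclideanSpace ℝ (Fin n)) (EuclideanSpace ℝ (Fin n))}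
    (hα : IsStarPartialHomeo α) (hβ : IsStarPartialHomeo β) (h : α.target = β.source) :
    IsStarPartialHomeo (α.trans β) := by
  obtain ⟨hs, ht, hc, hc', h0, hseg⟩ := hα
  obtain ⟨hs2, ht2, hc2, hc2', h02, hseg2⟩ := hβ
  have hsrc := trans_source_eq h
  have htgt := trans_target_eq h
  have hmaps : Set.MapsTo α α.source β.source := fun x hx => h ▸ α.map_source hx
  have hmaps' : Set.MapsTo β.symm β.target α.target := fun y hy => h ▸ β.map_target hy
  refine ⟨hsrc ▸ hs, htgt ▸ ht2, ?_, ?_, ?_, ?_⟩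
  · rw [PartialEquiv.coe_trans, hsrc]
    exact hc2.comp hc hmaps
  · rw [PartialEquiv.coe_trans_symm, htgt]
    exact hc'.comp hc2' hmaps'
  · show β (α 0) = 0
    rw [h0, h02]
  · intro x hx
    rw [hsrc] at hx
    have hax : α x ∈ β.source := hmaps hx
    show (β ∘ α) '' _ = segment ℝ 0 (β (α x))
    rw [Set.image_comp, hseg _ hx, hseg2 _ hax]


variable {θ α β γ : PartialEquiv (EuclideanSpace ℝ (Fin n)) (EuclideanSpace ℝ (Fin n))}

theorem partA (hθ : IsStarPartialHomeo θ) (hθs : θ.source = L₁) (hθt : θ.target = L₂)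
    (hα : IsStarPartialHomeo α) (hαs : α.source = L₁) (hαt : α.target = L₁) :
    IsStarPartialHomeo (θ.symm.trans (α.trans θ)) ∧
      (θ.symm.trans (α.trans θ)).source = L₂ ∧ (θ.symm.trans (α.trans θ)).target = L₂ := by
  have h1 : α.target = θ.source := by rw [hαt, hθs]
  have hat : IsStarPartialHomeo (α.trans θ) := trans_isStarPH hα hθ h1
  have hats : (α.trans θ).source = L₁ := by rw [trans_source_eq h1, hαs]
  have h2 : θ.symm.target = (α.trans θ).source := by
    rw [PartialEquiv.symm_target, hθs, hats]
  refine ⟨trans_isStarPH (symm_isStarPH hθ) hat h2, ?_, ?_⟩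
  · rw [trans_source_eq h2, PartialEquiv.symm_source, hθt]
  · rw [trans_target_eq h2, trans_target_eq h1, hθt]

theorem conj_apply (hθ : IsStarPartialHomeo θ) (hθs : θ.source = L₁) (hθt : θ.target = L₂)
    (y : EuclideanSpace ℝ (Fin n)) :
    (θ.symm.trans (α.trans θ)) y = θ (α (θ.symm y)) := rfl

theorem partB (hθ : IsStarPartialHomeo θ) (hθs : θ.source = L₁) (hθt : θ.target = L₂)
    (hα : IsStarPartialHomeo α) (hαs : α.source = L₁) (hαt : α.target = L₁)
    (hβ : IsStarPartialHomeo β) (hβs : β.source = L₁) (hβt : β.target = L₁) :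
    θ.symm.trans ((α.trans β).trans θ) ≈
      (θ.symm.trans (α.trans θ)).trans (θ.symm.trans (β.trans θ)) := by
  have hab : α.target = β.source := by rw [hαt, hβs]
  have habs : (α.trans β).source = L₁ := by rw [trans_source_eq hab, hαs]
  have habt : (α.trans β).target = L₁ := by rw [trans_target_eq hab, hβt]
  obtain ⟨hΦα, hΦαs, hΦαt⟩ := partA hθ hθs hθt hα hαs hαt
  obtain ⟨hΦβ, hΦβs, hΦβt⟩ := partA hθ hθs hθt hβ hβs hβt
  obtain ⟨hΦab, hΦabs, hΦabt⟩ := partA hθ hθs hθt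
    (trans_isStarPH hα hβ hab) habs habt
  have hst : (θ.symm.trans (α.trans θ)).target = (θ.symm.trans (β.trans θ)).source := by
    rw [hΦαt, hΦβs]
  constructor
  · rw [hΦabs, trans_source_eq hst, hΦαs]
  · intro y hy
    rw [hΦabs] at hy
    have hy1 : θ.symm y ∈ L₁ := by
      have := θ.map_target (by rw [hθt]; exact hy)
      rwa [hθs] at this
    have hy2 : α (θ.symm y) ∈ L₁ := by
      have := α.map_source (by rw [hαs]; exact hy1)
      rwa [hαt] at this
    show θ ((α.trans β) (θ.symm y)) =
      (θ.symm.trans (β.trans θ)) ((θ.symm.trans (α.trans θ)) y)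
    rw [conj_apply hθ hθs hθt, conj_apply hθ hθs hθt]
    have hli : θ.symm (θ (α (θ.symm y))) = α (θ.symm y) :=
      θ.left_inv (by rw [hθs]; exact hy2)
    rw [hli]
    rfl

theorem partC (hθ : IsStarPartialHomeo θ) (hθs : θ.source = L₁) (hθt : θ.target = L₂)
    (hγ : IsStarPartialHomeo γ) (hγs : γ.source = L₂) (hγt : γ.target = L₂) :
    ∃ α : PartialEquiv (EuclideanSpace ℝ (Fin n)) (EuclideanSpace ℝ (Fin n)),
      IsStarPartialHomeo α ∧ α.source = L₁ ∧ α.target = L₁ ∧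
        θ.symm.trans (α.trans θ) ≈ γ := by
  have h1 : γ.target = θ.symm.source := by rw [hγt, PartialEquiv.symm_source, hθt]
  have h2 : θ.target = (γ.trans θ.symm).source := by
    rw [trans_source_eq h1, hγs, hθt]
  refine ⟨θ.trans (γ.trans θ.symm),
    trans_isStarPH hθ (trans_isStarPH hγ (symm_isStarPH hθ) h1) h2, ?_, ?_, ?_⟩
  · rw [trans_source_eq h2, hθs]
  · rw [trans_target_eq h2, trans_target_eq h1, PartialEquiv.symm_target, hθs]
  · obtain ⟨hΦ, hΦs, hΦt⟩ := partA hθ hθs hθt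
      (trans_isStarPH hθ (trans_isStarPH hγ (symm_isStarPH hθ) h1) h2)
      (by rw [trans_source_eq h2, hθs])
      (by rw [trans_target_eq h2, trans_target_eq h1, PartialEquiv.symm_target, hθs])
    constructor
    · rw [hΦs, hγs]
    · intro y hy
      rw [hΦs] at hy
      have hy1 : θ (θ.symm y) = y := θ.right_inv (by rw [hθt]; exact hy)
      have hy2 : γ y ∈ θ.target := by
        rw [hθt]
        have := γ.map_source (by rw [hγs]; exact hy)
        rwa [hγt] at this
      show θ ((θ.trans (γ.trans θ.symm)) (θ.symm y)) = γ y
      show θ (θ.symm (γ (θ (θ.symm y)))) = γ y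
      rw [hy1, θ.right_inv hy2]

theorem partD (hθ : IsStarPartialHomeo θ) (hθs : θ.source = L₁) (hθt : θ.target = L₂)
    (hα : IsStarPartialHomeo α) (hαs : α.source = L₁) (hαt : α.target = L₁)
    (hβ : IsStarPartialHomeo β) (hβs : β.source = L₁) (hβt : β.target = L₁)
    (h : θ.symm.trans (α.trans θ) ≈ θ.symm.trans (β.trans θ)) : α ≈ β := by
  obtain ⟨hseq, heq⟩ := h
  obtain ⟨hΦα, hΦαs, hΦαt⟩ := partA hθ hθs hθt hα hαs hαt
  constructor
  · rw [hαs, hβs]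
  · intro x hx
    rw [hαs] at hx
    have hθx : θ x ∈ L₂ := by
      have := θ.map_source (by rw [hθs]; exact hx)
      rwa [hθt] at this
    have h2 := heq (by rw [hΦαs]; exact hθx)
    rw [conj_apply hθ hθs hθt, conj_apply hθ hθs hθt,
      θ.left_inv (by rw [hθs]; exact hx)] at h2
    have hax : α x ∈ L₁ := by
      have := α.map_source (by rw [hαs]; exact hx); rwa [hαt] at this
    have hbx : β x ∈ L₁ := by
      have := β.map_source (by rw [hβs]; exact hx); rwa [hβt] at this
    have := congrArg θ.symm h2
    rwa [θ.left_inv (by rw [hθs]; exact hax), θ.left_inv (by rw [hθs]; exact hbx)] at this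

end StarAux

theorem stmt_14 (n : ℕ) (hn : 1 ≤ n) (L₁ L₂ : Set (EuclideanSpace ℝ (Fin n)))
    (h₁ : IsStar L₁) (h₂ : IsStar L₂) :
    ∃ θ : PartialEquiv (EuclideanSpace ℝ (Fin n)) (EuclideanSpace ℝ (Fin n)),
      IsStarPartialHomeo θ ∧ θ.source = L₁ ∧ θ.target = L₂ ∧
      (∀ α : PartialEquiv (EuclideanSpace ℝ (Fin n)) (EuclideanSpace ℝ (Fin n)),
        IsStarPartialHomeo α → α.source = L₁ → α.target = L₁ →
          IsStarPartialHomeo (θ.symm.trans (α.trans θ)) ∧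
          (θ.symm.trans (α.trans θ)).source = L₂ ∧
          (θ.symm.trans (α.trans θ)).target = L₂) ∧
      (∀ α β : PartialEquiv (EuclideanSpace ℝ (Fin n)) (EuclideanSpace ℝ (Fin n)),
        IsStarPartialHomeo α → α.source = L₁ → α.target = L₁ →
        IsStarPartialHomeo β → β.source = L₁ → β.target = L₁ →
          θ.symm.trans ((α.trans β).trans θ) ≈
            (θ.symm.trans (α.trans θ)).trans (θ.symm.trans (β.trans θ))) ∧
      (∀ γ : PartialEquiv (EuclideanSpace ℝ (Fin n)) (EuclideanSpace ℝ (Fin n)),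
        IsStarPartialHomeo γ → γ.source = L₂ → γ.target = L₂ →
          ∃ α : PartialEquiv (EuclideanSpace ℝ (Fin n)) (EuclideanSpace ℝ (Fin n)),
            IsStarPartialHomeo α ∧ α.source = L₁ ∧ α.target = L₁ ∧
            θ.symm.trans (α.trans θ) ≈ γ) ∧
      (∀ α β : PartialEquiv (EuclideanSpace ℝ (Fin n)) (EuclideanSpace ℝ (Fin n)),
        IsStarPartialHomeo α → α.source = L₁ → α.target = L₁ →
        IsStarPartialHomeo β → β.source = L₁ → β.target = L₁ →
          θ.symm.trans (α.trans θ) ≈ θ.symm.trans (β.trans θ) → α ≈ β) := by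
  have hθ := StarAux.theta_isStarPH hn h₁ h₂
  refine ⟨StarAux.theta L₁ L₂ h₁ h₂, hθ, rfl, rfl,
    fun α hα hαs hαt => StarAux.partA hθ rfl rfl hα hαs hαt,
    fun α β hα hαs hαt hβ hβs hβt => StarAux.partB hθ rfl rfl hα hαs hαt hβ hβs hβt,
    fun γ hγ hγs hγt => StarAux.partC hθ rfl rfl hγ hγs hγt,
    fun α β hα hαs hαt hβ hβs hβt h => StarAux.partD hθ rfl rfl hα hαs hαt hβ hβs hβt h⟩
end
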